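/- Let n ≥ 1 and 0 < η < 1. There exist a constant α = α(n, η) > 1 and a constant C = C(n, η) < ∞ with the following property. Let Δ ⊂ ℝⁿ be an axis-parallel cube, let u : ℝⁿ × (0, ∞) → ℝ be differentiable with ∫_{T(Δ)} |∇u(x,t)|² dx dt < ∞, and let 0 ≤ β < ∞. If for every axis-parallel subcube Q ⊂ Δ there exists an open set F ⊂ Q with |F| ≥ η·|Q| (Lebesgue measure in ℝⁿ) and ∫_{Ω_α(F) ∩ T(Q)} |∇u(x,t)|² · t dx dt ≤ β·|Q|, then ∫_{T(Δ)} |∇u(x,t)|² · t dx dt ≤ C·β·|Δ|. -/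

import Mathlib

open MeasureTheory

/-- The (closed) axis-parallel cube in `ℝⁿ` with center `c` and side length `l`. -/
def cube (n : ℕ) (c : EuclideanSpace ℝ (Fin n)) (l : ℝ) :
    Set (EuclideanSpace ℝ (Fin n)) :=
  {x | ∀ i, |x i - c i| ≤ l / 2}

/-- The Carleson region `T(Q) = {(x,t) : x ∈ Q, 0 < t < l(Q)}` over the cube with
center `c` and side length `l`. -/
def carlesonRegion (n : ℕ) (c : EuclideanSpace ℝ (Fin n)) (l : ℝ) :
    Set (EuclideanSpace ℝ (Fin n) × ℝ) :=
  {p | p.1 ∈ cube n c l ∧ 0 < p.2 ∧ p.2 < l}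

/-- The cone `Γ_α(P) = {(x,t) : t > 0, |x - P| < α t}` with vertex `P` and aperture `α`. -/
def cone (n : ℕ) (α : ℝ) (P : EuclideanSpace ℝ (Fin n)) :
    Set (EuclideanSpace ℝ (Fin n) × ℝ) :=
  {p | 0 < p.2 ∧ ‖p.1 - P‖ < α * p.2}

/-- The sawtooth region `Ω_α(F) = ⋃_{P ∈ F} Γ_α(P)`. -/
def sawtooth (n : ℕ) (α : ℝ) (F : Set (EuclideanSpace ℝ (Fin n))) :
    Set (EuclideanSpace ℝ (Fin n) × ℝ) :=
  ⋃ P ∈ F, cone n α P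

/-- The upper half space `ℝⁿ × (0, ∞)`. -/
def upperHalf (n : ℕ) : Set (EuclideanSpace ℝ (Fin n) × ℝ) := {p | 0 < p.2}

/-!
Fix a truncation height `ε > 0` and argue by induction on the number of halvings that bring the
side of a subcube `Q ⊆ Δ` below `ε`. Take `F ⊆ Q` from the hypothesis. A point `(x, t)` of `T(Q)`
outside the sawtooth `Ω_α(F)` is at distance at least `α t` from `F`; as `α > 2 √n`, the largest
dyadic subcube of `Q` that contains `x` and misses `F` is proper, and its Carleson region contains
`(x, t)` (for `x` off a null set of `Q`). These maximal subcubes are disjoint and lie in `Q \ F`,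
so, writing `μ` for the measure `|∇u|² t dx dt` truncated at height `ε`, the induction hypothesis
on them gives
`η μ(T(Q)) ≤ η β |Q| + β Σ |Q'| ≤ β (η |Q| + |Q \ F|) ≤ β (|F| + |Q \ F|) = β |Q|`.
Letting `ε → 0` gives the theorem with `C = 1 / η`.
-/

open Set
open scoped ENNReal

section Boxes

variable {ι : Type*} [Fintype ι]

theorem EuclideanSpace.volume_setOf_forall_mem (b : ι → Set ℝ) :
    volume {x : EuclideanSpace ℝ ι | ∀ i, x i ∈ b i} = ∏ i, volume (b i) := by
  have h : {x : EuclideanSpace ℝ ι | ∀ i, x i ∈ b i}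
      = (MeasurableEquiv.toLp 2 (ι → ℝ)).symm ⁻¹' univ.pi b := by
    ext x; simp [Set.mem_pi]
  rw [h, (EuclideanSpace.volume_preserving_symm_measurableEquiv_toLp ι).measure_preimage_equiv,
    volume_pi_pi]

theorem EuclideanSpace.norm_le_sqrt_card_mul {x : EuclideanSpace ℝ ι} {r : ℝ} (hr : 0 ≤ r)
    (h : ∀ i, |x i| ≤ r) : ‖x‖ ≤ √(Fintype.card ι) * r := by
  rw [EuclideanSpace.norm_eq, ← Real.sqrt_sq hr, ← Real.sqrt_mul (Nat.cast_nonneg _)]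
  refine Real.sqrt_le_sqrt ?_
  calc ∑ i, ‖x i‖ ^ 2 ≤ ∑ _i : ι, r ^ 2 := by
        gcongr with i
        exact h i
    _ = Fintype.card ι * r ^ 2 := by simp

end Boxes

variable {n : ℕ}

section Cubes

theorem cube_eq_setOf_forall_mem_Icc (c : EuclideanSpace ℝ (Fin n)) (l : ℝ) :
    cube n c l = {x | ∀ i, x i ∈ Icc (c i - l / 2) (c i + l / 2)} := by
  ext x
  refine forall_congr' fun i => ?_
  rw [abs_le, mem_Icc]
  constructor <;> rintro ⟨h₁, h₂⟩ <;> constructor <;> linarith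

theorem volume_cube (c : EuclideanSpace ℝ (Fin n)) (l : ℝ) :
    volume (cube n c l) = ENNReal.ofReal l ^ n := by
  rw [cube_eq_setOf_forall_mem_Icc, EuclideanSpace.volume_setOf_forall_mem]
  simp [Real.volume_Icc]

theorem volume_cube_ne_top (c : EuclideanSpace ℝ (Fin n)) (l : ℝ) : volume (cube n c l) ≠ ∞ := by
  simp [volume_cube]

theorem measurableSet_cube (c : EuclideanSpace ℝ (Fin n)) (l : ℝ) : MeasurableSet (cube n c l) := by
  unfold cube; measurability

theorem measurableSet_carlesonRegion (c : EuclideanSpace ℝ (Fin n)) (l : ℝ) :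
    MeasurableSet (carlesonRegion n c l) :=
  (measurableSet_cube c l).prod measurableSet_Ioo

theorem carlesonRegion_subset_carlesonRegion {c c' : EuclideanSpace ℝ (Fin n)} {l l' : ℝ}
    (hc : cube n c l ⊆ cube n c' l') (hl : l ≤ l') :
    carlesonRegion n c l ⊆ carlesonRegion n c' l' :=
  fun _ ⟨hx, ht₀, ht⟩ => ⟨hc hx, ht₀, ht.trans_le hl⟩

end Cubes

noncomputable section DyadicGrid

variable (c : EuclideanSpace ℝ (Fin n)) (l : ℝ)

/-- Dyadic cells are half-open, so that each generation partitions `ℝⁿ`. -/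
def dyadicIndex (j : ℕ) (x : EuclideanSpace ℝ (Fin n)) : Fin n → ℤ :=
  fun i => ⌊(x i - c i + l / 2) / (l / 2 ^ j)⌋

def dyadicCell (j : ℕ) (k : Fin n → ℤ) : Set (EuclideanSpace ℝ (Fin n)) :=
  {x | dyadicIndex c l j x = k}

/-- `cube n (dyadicCenter c l j k) (l / 2 ^ j)` is the closure of `dyadicCell c l j k`. -/
def dyadicCenter (j : ℕ) (k : Fin n → ℤ) : EuclideanSpace ℝ (Fin n) :=
  WithLp.toLp 2 fun i => c i - l / 2 + (k i + 1 / 2) * (l / 2 ^ j)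

variable {c l}

theorem dyadicIndex_add_div (j d : ℕ) (x : EuclideanSpace ℝ (Fin n)) (i : Fin n) :
    dyadicIndex c l (j + d) x i / 2 ^ d = dyadicIndex c l j x i := by
  have h := Int.floor_div_natCast ((x i - c i + l / 2) / (l / 2 ^ (j + d))) (2 ^ d)
  push_cast at h
  rw [dyadicIndex, dyadicIndex, ← h, pow_add]
  field_simp

theorem dyadicIndex_eq_of_le {j j' : ℕ} (h : j ≤ j') {x y : EuclideanSpace ℝ (Fin n)}
    (hxy : dyadicIndex c l j' x = dyadicIndex c l j' y) :
    dyadicIndex c l j x = dyadicIndex c l j y := by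
  obtain ⟨d, rfl⟩ := Nat.exists_eq_add_of_le h
  funext i
  rw [← dyadicIndex_add_div j d, ← dyadicIndex_add_div j d, hxy]

theorem norm_sub_le_of_dyadicIndex_eq (hl : 0 < l) {j : ℕ} {x y : EuclideanSpace ℝ (Fin n)}
    (h : dyadicIndex c l j x = dyadicIndex c l j y) : ‖x - y‖ ≤ √n * (l / 2 ^ j) := by
  have hs : 0 < l / 2 ^ j := by positivity
  have hcoord (i : Fin n) : |(x - y) i| ≤ l / 2 ^ j := by
    have := (Int.abs_sub_lt_one_of_floor_eq_floor (congrFun h i)).le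
    rwa [← sub_div, abs_div, abs_of_pos hs, div_le_one hs, add_sub_add_right_eq_sub,
      sub_sub_sub_cancel_right, ← PiLp.sub_apply] at this
  simpa using EuclideanSpace.norm_le_sqrt_card_mul hs.le hcoord

theorem mem_cube_dyadicCenter (hl : 0 < l) (j : ℕ) (x : EuclideanSpace ℝ (Fin n)) :
    x ∈ cube n (dyadicCenter c l j (dyadicIndex c l j x)) (l / 2 ^ j) := by
  have hs : 0 < l / 2 ^ j := by positivity
  intro i
  have h₁ := Int.floor_le ((x i - c i + l / 2) / (l / 2 ^ j))
  have h₂ := Int.lt_floor_add_one ((x i - c i + l / 2) / (l / 2 ^ j))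
  rw [le_div_iff₀ hs] at h₁
  rw [div_lt_iff₀ hs] at h₂
  simp only [dyadicCenter, dyadicIndex]
  rw [abs_le]
  constructor <;> nlinarith

theorem cube_dyadicCenter_subset (hl : 0 < l) {x : EuclideanSpace ℝ (Fin n)}
    (hx : x ∈ dyadicCell c l 0 0) (j : ℕ) :
    cube n (dyadicCenter c l j (dyadicIndex c l j x)) (l / 2 ^ j) ⊆ cube n c l := by
  intro y hy i
  set k := dyadicIndex c l j x i
  have hdiv : k / 2 ^ j = 0 := by
    have := dyadicIndex_add_div (c := c) (l := l) 0 j x i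
    rw [zero_add] at this
    exact this.trans (congrFun hx i)
  have hk : k % 2 ^ j = k := by rw [Int.emod_def, hdiv, mul_zero, sub_zero]
  have hk₀ : (0 : ℝ) ≤ k := by
    rw [← hk]; exact_mod_cast Int.emod_nonneg k (by positivity)
  have hk₁ : (k : ℝ) + 1 ≤ 2 ^ j := by
    have := Int.emod_lt_of_pos k (by positivity : (0 : ℤ) < 2 ^ j)
    rw [hk] at this
    exact_mod_cast this
  have hs : l / 2 ^ j * 2 ^ j = l := div_mul_cancel₀ l (by positivity)
  have hy := abs_le.1 (hy i)
  simp only [dyadicCenter, PiLp.toLp_apply] at hy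
  rw [abs_le]
  constructor <;> nlinarith [mul_nonneg hk₀ (by positivity : (0 : ℝ) ≤ l / 2 ^ j),
    mul_le_mul_of_nonneg_left hk₁ (by positivity : (0 : ℝ) ≤ l / 2 ^ j)]

theorem dyadicCell_eq (hl : 0 < l) (j : ℕ) (k : Fin n → ℤ) :
    dyadicCell c l j k = {x | ∀ i, x i ∈
      Ico (c i - l / 2 + k i * (l / 2 ^ j)) (c i - l / 2 + (k i + 1) * (l / 2 ^ j))} := by
  have hs : 0 < l / 2 ^ j := by positivity
  ext x
  simp only [dyadicCell, dyadicIndex, mem_ofPred_eq, funext_iff, Int.floor_eq_iff,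
    le_div_iff₀ hs, div_lt_iff₀ hs, mem_Ico]
  refine forall_congr' fun i => ?_
  constructor <;> rintro ⟨h₁, h₂⟩ <;> constructor <;> linarith

theorem measurableSet_dyadicCell (j : ℕ) (k : Fin n → ℤ) :
    MeasurableSet (dyadicCell c l j k) :=
  measurableSet_eq_fun (measurable_pi_iff.2 fun _ => Int.measurable_floor.comp (by fun_prop))
    measurable_const

theorem volume_dyadicCell (hl : 0 < l) (j : ℕ) (k : Fin n → ℤ) :
    volume (dyadicCell c l j k) = ENNReal.ofReal (l / 2 ^ j) ^ n := by
  rw [dyadicCell_eq hl, EuclideanSpace.volume_setOf_forall_mem]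
  simp [Real.volume_Ico, add_mul]

theorem dyadicCell_zero_subset_cube (hl : 0 < l) : dyadicCell c l 0 0 ⊆ cube n c l := fun x hx =>
  cube_dyadicCenter_subset hl hx 0 (mem_cube_dyadicCenter hl 0 x)

theorem volume_cube_diff_dyadicCell_zero (hl : 0 < l) :
    volume (cube n c l \ dyadicCell c l 0 0) = 0 := by
  rw [measure_sdiff (dyadicCell_zero_subset_cube hl)
    (measurableSet_dyadicCell 0 0).nullMeasurableSet (by simp [volume_dyadicCell hl]),
    volume_cube, volume_dyadicCell hl, pow_zero, div_one, tsub_self]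

end DyadicGrid

section StoppingCells

variable (c : EuclideanSpace ℝ (Fin n)) (l : ℝ) (F : Set (EuclideanSpace ℝ (Fin n)))

def DyadicCellMeets (j : ℕ) (x : EuclideanSpace ℝ (Fin n)) : Prop :=
  ∃ y ∈ F, dyadicIndex c l j y = dyadicIndex c l j x

/-- The maximal proper dyadic subcells of `dyadicCell c l 0 0` that miss `F`, encoded as pairs
(generation, index). -/
def stoppingCells : Set (ℕ × (Fin n → ℤ)) :=
  {p | ∃ x ∈ dyadicCell c l 0 0, ∃ j, DyadicCellMeets c l F j x ∧
    ¬ DyadicCellMeets c l F (j + 1) x ∧ p = (j + 1, dyadicIndex c l (j + 1) x)}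

variable {c l F}

theorem DyadicCellMeets.mono {j j' : ℕ} {x : EuclideanSpace ℝ (Fin n)}
    (h : DyadicCellMeets c l F j' x) (hj : j ≤ j') : DyadicCellMeets c l F j x :=
  let ⟨y, hyF, hy⟩ := h
  ⟨y, hyF, dyadicIndex_eq_of_le hj hy⟩

theorem dyadicCellMeets_congr {j : ℕ} {x z : EuclideanSpace ℝ (Fin n)}
    (h : dyadicIndex c l j x = dyadicIndex c l j z) :
    DyadicCellMeets c l F j x ↔ DyadicCellMeets c l F j z := by
  simp only [DyadicCellMeets, h]

theorem pairwiseDisjoint_stoppingCells :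
    (stoppingCells c l F).PairwiseDisjoint fun p => dyadicCell c l p.1 p.2 := by
  /- A point `z` of the cell `p = (j + 1, k)` has its generation-`j` cell meeting `F` and its
  generation-`(j + 1)` cell missing `F`; since meeting `F` is antitone in the generation, this
  pins down `j`, and then `k` is the index of `z`. -/
  have key : ∀ p ∈ stoppingCells c l F, ∀ z ∈ dyadicCell c l p.1 p.2, ∃ j,
      DyadicCellMeets c l F j z ∧ ¬ DyadicCellMeets c l F (j + 1) z ∧
      p = (j + 1, dyadicIndex c l (j + 1) z) := by
    rintro _ ⟨x, -, j, hmeet, hmiss, rfl⟩ z hz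
    have hz : dyadicIndex c l (j + 1) x = dyadicIndex c l (j + 1) z := (hz : _ = _).symm
    refine ⟨j, (dyadicCellMeets_congr (dyadicIndex_eq_of_le j.le_succ hz)).1 hmeet,
      (dyadicCellMeets_congr hz).not.1 hmiss, by rw [hz]⟩
  intro p hp p' hp' hne
  refine Set.disjoint_left.2 fun z hz hz' => hne ?_
  obtain ⟨j, hmeet, hmiss, rfl⟩ := key p hp z hz
  obtain ⟨j', hmeet', hmiss', rfl⟩ := key p' hp' z hz'
  obtain rfl : j = j' := by
    by_contra hjj
    rcases Nat.lt_or_gt_of_ne hjj with h | h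
    · exact hmiss (hmeet'.mono h)
    · exact hmiss' (hmeet.mono h)
  rfl

theorem one_le_of_mem_stoppingCells {p : ℕ × (Fin n → ℤ)} (hp : p ∈ stoppingCells c l F) :
    1 ≤ p.1 := by
  obtain ⟨x, -, j, -, -, rfl⟩ := hp
  exact j.succ_pos

theorem cube_subset_of_mem_stoppingCells (hl : 0 < l) {p : ℕ × (Fin n → ℤ)}
    (hp : p ∈ stoppingCells c l F) :
    cube n (dyadicCenter c l p.1 p.2) (l / 2 ^ p.1) ⊆ cube n c l := by
  obtain ⟨x, hx, j, -, -, rfl⟩ := hp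
  exact cube_dyadicCenter_subset hl hx (j + 1)

theorem dyadicCell_subset_of_mem_stoppingCells (hl : 0 < l) {p : ℕ × (Fin n → ℤ)}
    (hp : p ∈ stoppingCells c l F) : dyadicCell c l p.1 p.2 ⊆ cube n c l \ F := by
  intro z hz
  refine ⟨cube_subset_of_mem_stoppingCells hl hp ?_, fun hzF => ?_⟩
  · rw [← show dyadicIndex c l p.1 z = p.2 from hz]
    exact mem_cube_dyadicCenter hl p.1 z
  · obtain ⟨x, -, j, -, hmiss, rfl⟩ := hp
    exact hmiss ⟨z, hzF, hz⟩

theorem tsum_volume_stoppingCells_le (hl : 0 < l) :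
    ∑' p : stoppingCells c l F, volume (cube n (dyadicCenter c l p.1.1 p.1.2) (l / 2 ^ p.1.1))
      ≤ volume (cube n c l \ F) := by
  calc ∑' p : stoppingCells c l F, volume (cube n (dyadicCenter c l p.1.1 p.1.2) (l / 2 ^ p.1.1))
      = ∑' p : stoppingCells c l F, volume (dyadicCell c l p.1.1 p.1.2) := by
        simp only [volume_cube, volume_dyadicCell hl]
    _ = volume (⋃ p ∈ stoppingCells c l F, dyadicCell c l p.1 p.2) :=
        (measure_biUnion (to_countable _) pairwiseDisjoint_stoppingCells
          fun _ _ => measurableSet_dyadicCell _ _).symm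
    _ ≤ volume (cube n c l \ F) :=
        measure_mono (iUnion₂_subset fun _ hp => dyadicCell_subset_of_mem_stoppingCells hl hp)

end StoppingCells

section Covering

variable {c : EuclideanSpace ℝ (Fin n)} {l α : ℝ} {F : Set (EuclideanSpace ℝ (Fin n))}

theorem exists_stopping_generation (hl : 0 < l) (hα : 2 * √n < α)
    {x : EuclideanSpace ℝ (Fin n)} {t : ℝ} (ht : 0 < t) (hfar : ∀ y ∈ F, α * t ≤ ‖x - y‖)
    (h₀ : DyadicCellMeets c l F 0 x) :
    ∃ j, DyadicCellMeets c l F j x ∧ ¬ DyadicCellMeets c l F (j + 1) x ∧ t < l / 2 ^ (j + 1) := by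
  have hα₀ : 0 < α := (mul_nonneg zero_le_two (Real.sqrt_nonneg _)).trans_lt hα
  have hclose (j : ℕ) (h : DyadicCellMeets c l F j x) : α * t ≤ √n * (l / 2 ^ j) := by
    obtain ⟨y, hyF, hy⟩ := h
    exact (hfar y hyF).trans (norm_sub_le_of_dyadicIndex_eq hl hy.symm)
  obtain ⟨j₁, hj₁⟩ := (((tendsto_const_nhds.div_atTop
    (tendsto_pow_atTop_atTop_of_one_lt one_lt_two)).const_mul √n).eventually
    (gt_mem_nhds (by simpa using mul_pos hα₀ ht))).exists
  obtain ⟨j, hmeet, hmiss⟩ :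
      ∃ j, DyadicCellMeets c l F j x ∧ ¬ DyadicCellMeets c l F (j + 1) x := by
    by_contra! hstep
    exact (hclose j₁ (Nat.rec (motive := (DyadicCellMeets c l F · x)) h₀ hstep j₁)).not_gt hj₁
  refine ⟨j, hmeet, hmiss, lt_of_mul_lt_mul_left ?_ hα₀.le⟩
  calc α * t ≤ √n * (l / 2 ^ j) := hclose j hmeet
    _ = 2 * √n * (l / 2 ^ (j + 1)) := by rw [pow_succ]; field_simp
    _ < α * (l / 2 ^ (j + 1)) := by gcongr

theorem carlesonRegion_diff_sawtooth_subset (hl : 0 < l) (hα : 2 * √n < α)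
    (hF : ∃ y ∈ F, y ∈ dyadicCell c l 0 0) :
    carlesonRegion n c l \ sawtooth n α F ⊆ (cube n c l \ dyadicCell c l 0 0) ×ˢ univ ∪
      ⋃ p ∈ stoppingCells c l F, carlesonRegion n (dyadicCenter c l p.1 p.2) (l / 2 ^ p.1) := by
  rintro ⟨x, t⟩ ⟨⟨hxQ, ht, -⟩, hsaw⟩
  by_cases hx : x ∈ dyadicCell c l 0 0
  swap
  · exact Or.inl ⟨⟨hxQ, hx⟩, trivial⟩
  have hfar : ∀ y ∈ F, α * t ≤ ‖x - y‖ := fun y hy =>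
    not_lt.1 fun h => hsaw (mem_biUnion hy ⟨ht, h⟩)
  obtain ⟨y, hyF, hy⟩ := hF
  obtain ⟨j, hmeet, hmiss, htj⟩ :=
    exists_stopping_generation hl hα ht hfar ⟨y, hyF, (hy : _ = _).trans hx.symm⟩
  exact Or.inr (mem_biUnion ⟨x, hx, j, hmeet, hmiss, rfl⟩
    ⟨mem_cube_dyadicCenter hl _ x, ht, htj⟩)

end Covering

def SawtoothControlled (μ : Measure (EuclideanSpace ℝ (Fin n) × ℝ)) (α : ℝ) (η β : ℝ≥0∞)
    (cΔ : EuclideanSpace ℝ (Fin n)) (lΔ : ℝ) : Prop :=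
  ∀ c l, 0 < l → l ≤ lΔ → cube n c l ⊆ cube n cΔ lΔ →
    ∃ F, MeasurableSet F ∧ F ⊆ cube n c l ∧ η * volume (cube n c l) ≤ volume F ∧
      μ (sawtooth n α F ∩ carlesonRegion n c l) ≤ β * volume (cube n c l)

section SelfImprovement

variable {μ : Measure (EuclideanSpace ℝ (Fin n) × ℝ)} {α : ℝ} {η β : ℝ≥0∞}

theorem exists_mem_inter_dyadicCell_zero {c : EuclideanSpace ℝ (Fin n)} {l : ℝ} (hl : 0 < l)
    {F : Set (EuclideanSpace ℝ (Fin n))} (hFQ : F ⊆ cube n c l) (hF : volume F ≠ 0) :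
    ∃ y ∈ F, y ∈ dyadicCell c l 0 0 := by
  by_contra! h
  exact hF (measure_mono_null (fun y hy => ⟨hFQ hy, h y hy⟩ : F ⊆ cube n c l \ dyadicCell c l 0 0)
    (volume_cube_diff_dyadicCell_zero hl))

theorem measure_carlesonRegion_le_of_dyadicSubcubes (hμ : μ ≪ volume) (hα : 2 * √n < α)
    (hη : η ≠ 0) {c : EuclideanSpace ℝ (Fin n)} {l : ℝ} (hl : 0 < l)
    {F : Set (EuclideanSpace ℝ (Fin n))} (hFm : MeasurableSet F) (hFQ : F ⊆ cube n c l)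
    (hFvol : η * volume (cube n c l) ≤ volume F)
    (hsaw : μ (sawtooth n α F ∩ carlesonRegion n c l) ≤ β * volume (cube n c l))
    (hsub : ∀ j k, 1 ≤ j → cube n (dyadicCenter c l j k) (l / 2 ^ j) ⊆ cube n c l →
      η * μ (carlesonRegion n (dyadicCenter c l j k) (l / 2 ^ j))
        ≤ β * volume (cube n (dyadicCenter c l j k) (l / 2 ^ j))) :
    η * μ (carlesonRegion n c l) ≤ β * volume (cube n c l) := by
  have hF : ∃ y ∈ F, y ∈ dyadicCell c l 0 0 := by
    refine exists_mem_inter_dyadicCell_zero hl hFQ (ne_bot_of_le_ne_bot ?_ hFvol)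
    simp [volume_cube, hη, hl]
  have hnull : μ ((cube n c l \ dyadicCell c l 0 0) ×ˢ (univ : Set ℝ)) = 0 := by
    refine hμ ?_
    rw [Measure.volume_eq_prod, Measure.prod_prod, volume_cube_diff_dyadicCell_zero hl, zero_mul]
  have hcover : μ (carlesonRegion n c l) ≤ μ (sawtooth n α F ∩ carlesonRegion n c l) +
      ∑' p : stoppingCells c l F,
        μ (carlesonRegion n (dyadicCenter c l p.1.1 p.1.2) (l / 2 ^ p.1.1)) := by
    calc μ (carlesonRegion n c l)
        ≤ μ (sawtooth n α F ∩ carlesonRegion n c l ∪ ((cube n c l \ dyadicCell c l 0 0) ×ˢ univ ∪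
          ⋃ p ∈ stoppingCells c l F,
            carlesonRegion n (dyadicCenter c l p.1 p.2) (l / 2 ^ p.1))) := by
          refine measure_mono fun q hq => ?_
          by_cases hqs : q ∈ sawtooth n α F
          · exact Or.inl ⟨hqs, hq⟩
          · exact Or.inr (carlesonRegion_diff_sawtooth_subset hl hα hF ⟨hq, hqs⟩)
      _ ≤ _ := by
          refine (measure_union_le _ _).trans (add_le_add_right ((measure_union_le _ _).trans ?_) _)
          rw [hnull, zero_add]
          exact measure_biUnion_le _ (to_countable _) _
  calc η * μ (carlesonRegion n c l)
      ≤ η * μ (sawtooth n α F ∩ carlesonRegion n c l) + ∑' p : stoppingCells c l F,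
          η * μ (carlesonRegion n (dyadicCenter c l p.1.1 p.1.2) (l / 2 ^ p.1.1)) := by
        rw [ENNReal.tsum_mul_left, ← mul_add]
        exact mul_le_mul_right hcover η
    _ ≤ η * (β * volume (cube n c l)) + ∑' p : stoppingCells c l F,
          β * volume (cube n (dyadicCenter c l p.1.1 p.1.2) (l / 2 ^ p.1.1)) := by
        refine add_le_add (mul_le_mul_right hsaw η) (ENNReal.tsum_le_tsum fun p => ?_)
        exact hsub _ _ (one_le_of_mem_stoppingCells p.2) (cube_subset_of_mem_stoppingCells hl p.2)
    _ ≤ β * (volume F + volume (cube n c l \ F)) := by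
        rw [ENNReal.tsum_mul_left, mul_left_comm, ← mul_add]
        gcongr
        exact tsum_volume_stoppingCells_le hl
    _ = β * volume (cube n c l) := by
        rw [measure_add_sdiff hFm.nullMeasurableSet, union_eq_self_of_subset_left hFQ]

variable {cΔ : EuclideanSpace ℝ (Fin n)} {lΔ : ℝ}

/-- Truncating at height `ε` makes the Carleson regions of cubes of side at most `ε` empty, which
starts an induction on `⌈log₂ (l / ε)⌉`. -/
theorem measure_carlesonRegion_inter_le_of_sawtoothControlled (hμ : μ ≪ volume)
    (hα : 2 * √n < α) (hη : η ≠ 0) (hlΔ : 0 < lΔ) (H : SawtoothControlled μ α η β cΔ lΔ)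
    {ε : ℝ} (hε : 0 < ε) :
    η * μ (carlesonRegion n cΔ lΔ ∩ {p | ε < p.2}) ≤ β * volume (cube n cΔ lΔ) := by
  have hmeas : MeasurableSet {p : EuclideanSpace ℝ (Fin n) × ℝ | ε < p.2} :=
    measurableSet_lt measurable_const measurable_snd
  set ν := μ.restrict {p | ε < p.2}
  have hν : ν ≪ volume := (Measure.absolutelyContinuous_of_le Measure.restrict_le_self).trans hμ
  have key (m : ℕ) : ∀ c l, 0 < l → l ≤ lΔ → cube n c l ⊆ cube n cΔ lΔ → l ≤ 2 ^ m * ε →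
      η * ν (carlesonRegion n c l) ≤ β * volume (cube n c l) := by
    induction m with
    | zero =>
      intro c l _ _ _ hle
      rw [pow_zero, one_mul] at hle
      have : carlesonRegion n c l ∩ {p | ε < p.2} = ∅ :=
        eq_empty_of_forall_notMem fun p ⟨⟨_, _, hpl⟩, (hεp : ε < p.2)⟩ =>
          lt_asymm (hpl.trans_le hle) hεp
      simp [ν, Measure.restrict_apply' hmeas, this]
    | succ m ih =>
      intro c l hl hlΔ' hQ hle
      obtain ⟨F, hFm, hFQ, hFvol, hsaw⟩ := H c l hl hlΔ' hQ
      refine measure_carlesonRegion_le_of_dyadicSubcubes hν hα hη hl hFm hFQ hFvol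
        ((Measure.restrict_apply_le _ _).trans hsaw) fun j k hj hsub => ih _ _ (by positivity)
          ((div_le_self hl.le (one_le_pow₀ one_le_two)).trans hlΔ') (hsub.trans hQ) ?_
      calc l / 2 ^ j ≤ l / 2 ^ 1 := by gcongr; norm_num
        _ ≤ 2 ^ m * ε := by rw [pow_succ] at hle; linarith
  obtain ⟨m, hm⟩ := pow_unbounded_of_one_lt (lΔ / ε) one_lt_two
  have := key m cΔ lΔ hlΔ le_rfl subset_rfl ((div_le_iff₀ hε).1 hm.le)
  rwa [Measure.restrict_apply' hmeas] at this

theorem measure_carlesonRegion_le_of_sawtoothControlled (hμ : μ ≪ volume)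
    (hα : 2 * √n < α) (hη : η ≠ 0) (hlΔ : 0 < lΔ) (H : SawtoothControlled μ α η β cΔ lΔ) :
    η * μ (carlesonRegion n cΔ lΔ) ≤ β * volume (cube n cΔ lΔ) := by
  have hunion : carlesonRegion n cΔ lΔ =
      ⋃ k : ℕ, carlesonRegion n cΔ lΔ ∩ {p | 1 / ((k : ℝ) + 1) < p.2} := by
    refine (iUnion_subset fun k => inter_subset_left).antisymm' fun p hp => ?_
    obtain ⟨k, hk⟩ := exists_nat_one_div_lt hp.2.1
    exact mem_iUnion.2 ⟨k, hp, hk⟩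
  have hmono : Monotone fun k : ℕ => carlesonRegion n cΔ lΔ ∩ {p | 1 / ((k : ℝ) + 1) < p.2} :=
    fun k k' hk p ⟨hp, (hpk : 1 / ((k : ℝ) + 1) < p.2)⟩ =>
      ⟨hp, (Nat.one_div_le_one_div hk).trans_lt hpk⟩
  rw [hunion, hmono.measure_iUnion, ENNReal.mul_iSup]
  exact iSup_le fun k =>
    measure_carlesonRegion_inter_le_of_sawtoothControlled hμ hα hη hlΔ H (by positivity)

end SelfImprovement

theorem integrableOn_mul_snd_carlesonRegion {f : EuclideanSpace ℝ (Fin n) × ℝ → ℝ}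
    {c : EuclideanSpace ℝ (Fin n)} {l : ℝ} (hf : IntegrableOn f (carlesonRegion n c l)) :
    IntegrableOn (fun p => f p * p.2) (carlesonRegion n c l) :=
  hf.mul_bdd measurable_snd.aestronglyMeasurable <|
    ae_restrict_of_forall_mem (measurableSet_carlesonRegion c l) fun _ ⟨_, h₀, h₁⟩ => by
      rw [Real.norm_eq_abs, abs_of_pos h₀]; exact h₁.le

theorem withDensity_ofReal_apply_of_subset {X : Type*} [MeasurableSpace X] {ν : Measure X}
    [SFinite ν] {g : X → ℝ} {S T : Set X} (hT : MeasurableSet T) (hg : IntegrableOn g T ν)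
    (hg₀ : ∀ x ∈ T, 0 ≤ g x) (hS : S ⊆ T) :
    ν.withDensity (fun x => ENNReal.ofReal (g x)) S = ENNReal.ofReal (∫ x in S, g x ∂ν) := by
  rw [withDensity_apply', ofReal_integral_eq_lintegral_ofReal (hg.mono_set hS)]
  exact ae_restrict_of_ae_restrict_of_subset hS (ae_restrict_of_forall_mem hT hg₀)

theorem sawtooth_to_carleson_square_function_general (n : ℕ)
    (η : ℝ) (hη0 : 0 < η) :
    ∃ α : ℝ, 1 < α ∧ ∃ C : ℝ,
      ∀ (cΔ : EuclideanSpace ℝ (Fin n)) (lΔ : ℝ), 0 < lΔ →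
      ∀ u : EuclideanSpace ℝ (Fin n) × ℝ → ℝ,
      DifferentiableOn ℝ u (upperHalf n) →
      IntegrableOn (fun p => ‖fderivWithin ℝ u (upperHalf n) p‖ ^ 2)
        (carlesonRegion n cΔ lΔ) volume →
      ∀ β : ℝ, 0 ≤ β →
      (∀ (cQ : EuclideanSpace ℝ (Fin n)) (lQ : ℝ), 0 < lQ →
        cube n cQ lQ ⊆ cube n cΔ lΔ →
        ∃ F : Set (EuclideanSpace ℝ (Fin n)), IsOpen F ∧ F ⊆ cube n cQ lQ ∧
          η * (volume (cube n cQ lQ)).toReal ≤ (volume F).toReal ∧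
          ∫ p in sawtooth n α F ∩ carlesonRegion n cQ lQ,
              ‖fderivWithin ℝ u (upperHalf n) p‖ ^ 2 * p.2 ∂volume
            ≤ β * (volume (cube n cQ lQ)).toReal) →
      ∫ p in carlesonRegion n cΔ lΔ,
          ‖fderivWithin ℝ u (upperHalf n) p‖ ^ 2 * p.2 ∂volume
        ≤ C * β * (volume (cube n cΔ lΔ)).toReal := by
  refine ⟨2 * √n + 2, by linarith [Real.sqrt_nonneg n], η⁻¹, ?_⟩
  intro cΔ lΔ hlΔ u _ hint β hβ H
  set g : EuclideanSpace ℝ (Fin n) × ℝ → ℝ := fun p => ‖fderivWithin ℝ u (upperHalf n) p‖ ^ 2 * p.2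
  set μ := volume.withDensity fun p => ENNReal.ofReal (g p)
  have hμ (S) (hS : S ⊆ carlesonRegion n cΔ lΔ) : μ S = ENNReal.ofReal (∫ p in S, g p) :=
    withDensity_ofReal_apply_of_subset (measurableSet_carlesonRegion _ _)
      (integrableOn_mul_snd_carlesonRegion hint) (fun p hp => mul_nonneg (sq_nonneg _) hp.2.1.le) hS
  have hvol {a : ℝ} (ha : 0 ≤ a) (c l) : ENNReal.ofReal a * volume (cube n c l) =
      ENNReal.ofReal (a * (volume (cube n c l)).toReal) := by
    rw [ENNReal.ofReal_mul ha, ENNReal.ofReal_toReal (volume_cube_ne_top c l)]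
  have hcontrol : SawtoothControlled μ (2 * √n + 2) (.ofReal η) (.ofReal β) cΔ lΔ := by
    intro c l hl hlΔ' hQ
    obtain ⟨F, hFo, hFQ, hFvol, hFint⟩ := H c l hl hQ
    refine ⟨F, hFo.measurableSet, hFQ, ?_, ?_⟩
    · rw [hvol hη0.le]
      exact (ENNReal.ofReal_le_ofReal hFvol).trans ENNReal.ofReal_toReal_le
    · rw [hμ _ (inter_subset_right.trans (carlesonRegion_subset_carlesonRegion hQ hlΔ')), hvol hβ]
      exact ENNReal.ofReal_le_ofReal hFint
  have key := measure_carlesonRegion_le_of_sawtoothControlled (withDensity_absolutelyContinuous _ _)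
    (by linarith) (ENNReal.ofReal_pos.2 hη0).ne' hlΔ hcontrol
  rw [hμ _ subset_rfl, hvol hβ, ← ENNReal.ofReal_mul hη0.le,
    ENNReal.ofReal_le_ofReal_iff (by positivity)] at key
  rwa [mul_assoc, le_inv_mul_iff₀ hη0]

/-- Self-improvement of the sawtooth square-function bound to the full Carleson-box
square-function bound: for `0 < η < 1` there are `α > 1` and `C < ∞` such that if on
every subcube `Q ⊆ Δ` there is an open set `F ⊆ Q` with `|F| ≥ η |Q|` on whose truncated
sawtooth the square function of `u` is at most `β |Q|`, then the square function of `u`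
over `T(Δ)` is at most `C β |Δ|`. -/
theorem sawtooth_to_carleson_square_function (n : ℕ) (hn : 1 ≤ n)
    (η : ℝ) (hη0 : 0 < η) (hη1 : η < 1) :
    ∃ α : ℝ, 1 < α ∧ ∃ C : ℝ,
      ∀ (cΔ : EuclideanSpace ℝ (Fin n)) (lΔ : ℝ), 0 < lΔ →
      ∀ u : EuclideanSpace ℝ (Fin n) × ℝ → ℝ,
      DifferentiableOn ℝ u (upperHalf n) →
      IntegrableOn (fun p => ‖fderivWithin ℝ u (upperHalf n) p‖ ^ 2)
        (carlesonRegion n cΔ lΔ) volume →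
      ∀ β : ℝ, 0 ≤ β →
      (∀ (cQ : EuclideanSpace ℝ (Fin n)) (lQ : ℝ), 0 < lQ →
        cube n cQ lQ ⊆ cube n cΔ lΔ →
        ∃ F : Set (EuclideanSpace ℝ (Fin n)), IsOpen F ∧ F ⊆ cube n cQ lQ ∧
          η * (volume (cube n cQ lQ)).toReal ≤ (volume F).toReal ∧
          ∫ p in sawtooth n α F ∩ carlesonRegion n cQ lQ,
              ‖fderivWithin ℝ u (upperHalf n) p‖ ^ 2 * p.2 ∂volume
            ≤ β * (volume (cube n cQ lQ)).toReal) →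
      ∫ p in carlesonRegion n cΔ lΔ,
          ‖fderivWithin ℝ u (upperHalf n) p‖ ^ 2 * p.2 ∂volume
        ≤ C * β * (volume (cube n cΔ lΔ)).toReal :=
  sawtooth_to_carleson_square_function_general n η hη0
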